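/- Let C ⊆ F_{q^m}^n be a generalized twisted Gabidulin code of dimension k < n defined by the space V = {f_0 x + f_1 x^{q^s} + ... + f_{k-1} x^{q^{s(k-1)}} + η f_0^{q^h} x^{q^{sk}} : f_i ∈ F_{q^m}} evaluated at n F_q-independent points, where gcd(m,s)=1. Then dim(C ∩ C^{q^s}) ≥ k - 2, where C^{q^s} = {(c_1^{q^s},...,c_n^{q^s}) : c ∈ C}. -/

import Mathlib

/-!
Let `σ x = x ^ q ^ s`. Codewords are the values at the points `aⱼ` of σ-polynomials
`∑ fᵢ σⁱ`. Those without the terms `σ⁰, σ¹` lie in `C` (the twist vanishes with `f₀`) and are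
σ-images of codewords without the term `σ⁰`, obtained by shifting the coefficients down through
`σ⁻¹`; so they lie in `C ∩ C^{q^s}`. They form a space of dimension `k - 2` because evaluation at
the points is injective: as `gcd(m, s) = 1` the fixed field of `σ` is `F_q`, a nonzero
σ-polynomial with `d + 1` terms has an `F_q`-kernel of dimension at most `d` (peel off one root `u`
at a time by factoring through `x ↦ σ (x / u) - x / u`), and the `aⱼ` are `F_q`-independent.
-/

open Finset Matrix

section LinearizedPolynomial

variable {K F : Type*} [Field K] [Field F] [Algebra K F] (σ : F →ₐ[K] F)

def linearizedPoly (c : ℕ → F) (n : ℕ) : F →ₗ[K] F :=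
  ∑ i ∈ range n, c i • (σ ^ i).toLinearMap

@[simp]
lemma linearizedPoly_apply (c : ℕ → F) (n : ℕ) (x : F) :
    linearizedPoly σ c n x = ∑ i ∈ range n, c i * (σ ^ i) x := by
  simp [linearizedPoly]

lemma linearizedPoly_succ_of_eq_zero {c : ℕ → F} {n : ℕ} (hc : c n = 0) :
    linearizedPoly σ c (n + 1) = linearizedPoly σ c n := by
  ext x
  simp [sum_range_succ, hc]

def twistedDiff (u : F) : F →ₗ[K] F :=
  (σ.toLinearMap - LinearMap.id) ∘ₗ LinearMap.mulLeft K u⁻¹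

lemma rank_ker_twistedDiff_le_one (hfix : ∀ x, σ x = x → x ∈ Set.range (algebraMap K F))
    {u : F} (hu : u ≠ 0) : Module.rank K (LinearMap.ker (twistedDiff σ u)) ≤ 1 := by
  have hle : LinearMap.ker (twistedDiff σ u) ≤ K ∙ u := by
    intro x hx
    obtain ⟨t, ht⟩ := hfix (u⁻¹ * x) (by simpa [twistedDiff, sub_eq_zero] using hx)
    refine Submodule.mem_span_singleton.mpr ⟨t, ?_⟩
    rw [Algebra.smul_def, ht]
    field_simp
  calc Module.rank K (LinearMap.ker (twistedDiff σ u))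
      ≤ Module.rank K (K ∙ u) := Submodule.rank_mono hle
    _ ≤ 1 := (rank_span_le _).trans (by simp)

/-- Writing `x = u * y`, summation by parts turns `∑ cᵢ σⁱ(u) σⁱ(y)` into a combination of the
`σⁱ (σ y - y)`, because the total `∑ cᵢ σⁱ(u)` vanishes. -/
lemma linearizedPoly_eq_comp_twistedDiff (c : ℕ → F) (d : ℕ) {u : F} (hu : u ≠ 0)
    (hcu : linearizedPoly σ c (d + 2) u = 0) :
    linearizedPoly σ c (d + 2) =
      linearizedPoly σ (fun i => -∑ j ∈ range (i + 1), c j * (σ ^ j) u) (d + 1) ∘ₗ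
        twistedDiff σ u := by
  ext x
  obtain ⟨y, rfl⟩ : ∃ y, x = u * y := ⟨u⁻¹ * x, by field_simp⟩
  have hD : twistedDiff σ u (u * y) = σ y - y := by simp [twistedDiff, hu]
  have key := sum_range_by_parts (fun i => (σ ^ i) y) (fun i => c i * (σ ^ i) u) (d + 2)
  simp only [linearizedPoly_apply] at hcu
  simp only [smul_eq_mul, hcu, mul_zero, zero_sub, show d + 2 - 1 = d + 1 from rfl] at key
  rw [LinearMap.comp_apply, hD, linearizedPoly_apply, linearizedPoly_apply]
  calc ∑ i ∈ range (d + 2), c i * (σ ^ i) (u * y)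
      = ∑ i ∈ range (d + 2), (σ ^ i) y * (c i * (σ ^ i) u) :=
        sum_congr rfl fun i _ => by rw [map_mul]; ring
    _ = _ := key
    _ = _ := by
      rw [← sum_neg_distrib]
      refine sum_congr rfl fun i _ => ?_
      rw [map_sub, pow_succ, AlgHom.mul_apply]
      ring

theorem rank_ker_linearizedPoly_le (hfix : ∀ x, σ x = x → x ∈ Set.range (algebraMap K F))
    (d : ℕ) {c : ℕ → F} (hc : ∃ i ≤ d, c i ≠ 0) :
    Module.rank K (LinearMap.ker (linearizedPoly σ c (d + 1))) ≤ d := by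
  induction d generalizing c with
  | zero =>
    obtain ⟨i, hi, hci⟩ := hc
    obtain rfl : i = 0 := by omega
    rw [LinearMap.ker_eq_bot.mpr fun x y hxy => by simpa [hci] using hxy, rank_bot]
    rfl
  | succ d ih =>
    show Module.rank K (LinearMap.ker (linearizedPoly σ c (d + 2))) ≤ (d + 1 : ℕ)
    obtain ⟨i, hi, hci⟩ := hc
    by_cases htop : c (d + 1) = 0
    · rw [linearizedPoly_succ_of_eq_zero σ htop]
      have hi' : i ≠ d + 1 := by rintro rfl; exact hci htop
      exact (ih ⟨i, by omega, hci⟩).trans (by norm_cast; omega)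
    by_cases hker : LinearMap.ker (linearizedPoly σ c (d + 2)) = ⊥
    · rw [hker, rank_bot]; exact zero_le
    obtain ⟨u, hu, hu0⟩ := (Submodule.ne_bot_iff _).mp hker
    rw [LinearMap.mem_ker] at hu
    have htop' : -∑ j ∈ range (d + 1), c j * (σ ^ j) u ≠ 0 := by
      have hsum := (linearizedPoly_apply σ c (d + 2) u).symm.trans hu
      rw [sum_range_succ] at hsum
      rw [neg_eq_of_add_eq_zero_right hsum]
      exact mul_ne_zero htop (map_ne_zero _ |>.mpr hu0)
    rw [linearizedPoly_eq_comp_twistedDiff σ c d hu0 hu, LinearMap.ker_comp]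
    calc Module.rank K (Submodule.comap (twistedDiff σ u) (LinearMap.ker _))
        ≤ Module.rank K (LinearMap.ker (linearizedPoly σ _ (d + 1))) +
            Module.rank K (LinearMap.ker (twistedDiff σ u)) := by
          simpa using LinearMap.lift_rank_comap_le (f := twistedDiff σ u) _
      _ ≤ d + 1 := add_le_add (ih ⟨d, le_rfl, htop'⟩) (rank_ker_twistedDiff_le_one σ hfix hu0)
      _ = (d + 1 : ℕ) := by push_cast; rfl

end LinearizedPolynomial

section MooreMatrix

variable {K F : Type*} [Field K] [Field F] [Algebra K F] (σ : F →ₐ[K] F) {n : ℕ}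

def mooreMatrix (a : Fin n → F) (k : ℕ) : Matrix (Fin k) (Fin n) F :=
  Matrix.of fun i j => (σ ^ (i : ℕ)) (a j)

lemma vecMul_mooreMatrix_apply (a : Fin n → F) {k : ℕ} (g : Fin k → F) (j : Fin n) :
    (g ᵥ* mooreMatrix σ a k) j = ∑ i, g i * (σ ^ (i : ℕ)) (a j) := rfl

theorem vecMul_mooreMatrix_injective (hfix : ∀ x, σ x = x → x ∈ Set.range (algebraMap K F))
    {a : Fin n → F} (ha : LinearIndependent K a) {k : ℕ} (hk : k ≤ n) :
    Function.Injective fun g : Fin k → F => g ᵥ* mooreMatrix σ a k := by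
  rw [← Matrix.coe_vecMulLinear, injective_iff_map_eq_zero]
  intro g hg
  by_contra hg0
  obtain ⟨i₀, hi₀⟩ := Function.ne_iff.mp hg0
  obtain ⟨d, rfl⟩ : ∃ d, k = d + 1 := ⟨k - 1, by have := i₀.pos; omega⟩
  set c : ℕ → F := Function.extend Fin.val g 0
  have hc (i : Fin (d + 1)) : c i = g i := Fin.val_injective.extend_apply g 0 i
  have hroots : Set.range a ⊆ LinearMap.ker (linearizedPoly σ c (d + 1)) := by
    rintro _ ⟨j, rfl⟩
    rw [SetLike.mem_coe, LinearMap.mem_ker, linearizedPoly_apply,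
      ← Fin.sum_univ_eq_sum_range (fun i => c i * (σ ^ i) (a j))]
    simpa [hc, vecMul_mooreMatrix_apply] using congrFun hg j
  have hrank : (n : Cardinal) ≤ d := calc
    (n : Cardinal) = Module.rank K (Submodule.span K (Set.range a)) := by
      rw [rank_span ha]
      simpa using (Cardinal.mk_range_eq_of_injective ha.injective).symm
    _ ≤ Module.rank K (LinearMap.ker (linearizedPoly σ c (d + 1))) :=
      Submodule.rank_mono (Submodule.span_le.mpr hroots)
    _ ≤ d := rank_ker_linearizedPoly_le σ hfix d ⟨i₀, by omega, by simpa [hc]⟩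
  norm_cast at hrank
  omega

lemma exists_vecMul_mooreMatrix_eq (a : Fin n → F) {r k : ℕ} (t : ℕ) (h : r ≤ k - t)
    (g : Fin r → F) :
    ∃ f : Fin k → F, (∀ i : Fin k, (i : ℕ) < t → f i = 0) ∧
      f ᵥ* mooreMatrix σ a k = g ᵥ* mooreMatrix σ (fun j => (σ ^ t) (a j)) r := by
  let e : Fin r → Fin k := fun i => ⟨i + t, by omega⟩
  have he : Function.Injective e := fun i i' hii' => by
    simpa [e, Fin.ext_iff] using hii'
  have hout (i : Fin k) (hi : i ∉ Set.range e) : Function.extend e g 0 i = 0 :=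
    Function.extend_apply' _ _ _ hi
  refine ⟨Function.extend e g 0, fun i hi => hout i ?_, ?_⟩
  · rintro ⟨i', rfl⟩
    simp [e] at hi
  ext j
  rw [vecMul_mooreMatrix_apply, vecMul_mooreMatrix_apply]
  refine (Fintype.sum_of_injective e he _ _ (fun i hi => by rw [hout i hi, zero_mul])
    fun i => ?_).symm
  rw [he.extend_apply, pow_add, AlgHom.mul_apply]

lemma map_vecMul_mooreMatrix (a : Fin n → F) {k : ℕ} (g : Fin k → F) (j : Fin n) :
    σ ((g ᵥ* mooreMatrix σ a k) j) = ((σ ∘ g) ᵥ* mooreMatrix σ (σ ∘ a) k) j := by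
  simp only [vecMul_mooreMatrix_apply, map_sum, map_mul, Function.comp_apply,
    ← AlgHom.mul_apply, ← pow_succ', pow_succ]

lemma exists_map_vecMul_mooreMatrix_eq (hσ : Function.Surjective σ) (a : Fin n → F) {k : ℕ}
    (g : Fin (k - 2) → F) :
    ∃ f : Fin k → F, (∀ i : Fin k, (i : ℕ) < 1 → f i = 0) ∧ ∀ j,
      σ ((f ᵥ* mooreMatrix σ a k) j) = (g ᵥ* mooreMatrix σ (fun j => (σ ^ 2) (a j)) (k - 2)) j := by
  obtain ⟨f, hf0, hf⟩ :=
    exists_vecMul_mooreMatrix_eq σ a (k := k) 1 (by omega) (Function.surjInv hσ ∘ g)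
  refine ⟨f, hf0, fun j => ?_⟩
  have hg : σ ∘ (Function.surjInv hσ ∘ g) = g :=
    funext fun i => Function.rightInverse_surjInv hσ (g i)
  have ha : (σ ∘ fun j => (σ ^ 1) (a j)) = fun j => (σ ^ 2) (a j) := funext fun j => by
    rw [Function.comp_apply, ← AlgHom.mul_apply, ← pow_succ']
  rw [hf, map_vecMul_mooreMatrix, hg, ha]

end MooreMatrix

theorem pow_eq_self_of_pow_pow_eq_self {M : Type*} [Monoid M] {q m s : ℕ}
    (hm : ∀ x : M, x ^ q ^ m = x) (hms : m.gcd s = 1) {x : M} (hx : x ^ q ^ s = x) :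
    x ^ q = x := by
  have hper (t : ℕ) (ht : x ^ q ^ t = x) : Function.IsPeriodicPt (· ^ q) t x := by
    simpa [Function.IsPeriodicPt, Function.IsFixedPt, pow_iterate] using ht
  simpa [hms, Function.IsPeriodicPt, Function.IsFixedPt] using (hper m (hm x)).gcd (hper s hx)

lemma exists_algHom_pow_apply {F : Type*} [Field F] {p q s₀ : ℕ} [ExpChar F p]
    (hq : q = p ^ s₀) (K : Subfield F) (hK : ∀ c ∈ K, c ^ q = c) (s : ℕ) :
    ∃ σ : F →ₐ[K] F, ∀ i x, (σ ^ i) x = x ^ q ^ (s * i) := by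
  have hKpow (c : F) (hc : c ∈ K) (t : ℕ) : c ^ q ^ t = c := by
    simpa [Function.IsFixedPt, pow_iterate] using
      (show Function.IsFixedPt (· ^ q) c from hK c hc).iterate t
  let σ : F →ₐ[K] F :=
    { iterateFrobenius F p (s₀ * s) with
      commutes' := fun c => by
        simpa [iterateFrobenius_def, pow_mul, ← hq] using hKpow (algebraMap K F c) c.2 s }
  have hσ : ⇑σ = (· ^ q ^ s) := funext fun x => by
    simp [σ, iterateFrobenius_def, pow_mul, ← hq]
  exact ⟨σ, fun i x => by rw [AlgHom.coe_pow, hσ, pow_iterate, pow_mul]⟩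

theorem stmt_16_general (p s0 m n k h s : ℕ) [Fact p.Prime]
    (F : Type*) [Field F] [Fintype F] [CharP F p]
    (q : ℕ) (hq : q = p ^ s0) (hcard : Fintype.card F = q ^ m)
    (hk : 0 < k) (hkn : k < n) (hgcd : Nat.gcd m s = 1)
    (eta : F)
    (Fq : Subfield F) (hFq : ∀ a : F, a ∈ Fq ↔ a ^ q = a)
    (a : Fin n → F) (ha : LinearIndependent Fq a)
    (C Cqs : Set (Fin n → F))
    (hC : C = {c | ∃ f : Fin k → F, ∀ j : Fin n,
      c j = (∑ i : Fin k, f i * (a j) ^ (q ^ (s * (i : ℕ)))) +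
        eta * (f ⟨0, hk⟩) ^ (q ^ h) * (a j) ^ (q ^ (s * k))})
    (hCqs : Cqs = {c | ∃ c' ∈ C, ∀ j : Fin n, c j = (c' j) ^ (q ^ s)}) :
    ∃ W : Submodule F (Fin n → F), (W : Set (Fin n → F)) ⊆ C ∩ Cqs ∧
      k - 2 ≤ Module.finrank F W := by
  obtain ⟨σ, hσ⟩ := exists_algHom_pow_apply hq Fq (fun c => (hFq c).1) s
  have hσ₁ (x : F) : σ x = x ^ q ^ s := by simpa using hσ 1 x
  have hfix (x : F) (hx : σ x = x) : x ∈ Set.range (algebraMap Fq F) :=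
    ⟨⟨x, (hFq x).2 <| pow_eq_self_of_pow_pow_eq_self
      (fun y => by rw [← hcard, FiniteField.pow_card]) hgcd (hσ₁ x ▸ hx)⟩, rfl⟩
  have hmemC (f : Fin k → F) (hf : ∀ i : Fin k, (i : ℕ) < 1 → f i = 0) :
      f ᵥ* mooreMatrix σ a k ∈ C := by
    have hq0 : q ≠ 0 := hq ▸ pow_ne_zero _ (Fact.out : p.Prime).ne_zero
    rw [hC]
    exact ⟨f, fun j => by simp [vecMul_mooreMatrix_apply, hσ, hf ⟨0, hk⟩ one_pos, hq0]⟩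
  have hσ_surj : Function.Surjective σ :=
    Finite.injective_iff_surjective.mp σ.toRingHom.injective
  refine ⟨LinearMap.range (mooreMatrix σ (fun j => (σ ^ 2) (a j)) (k - 2)).vecMulLinear,
    ?_, ?_⟩
  · rintro _ ⟨g, rfl⟩
    obtain ⟨f, hf0, hf⟩ := exists_vecMul_mooreMatrix_eq σ a 2 le_rfl g
    obtain ⟨f', hf'0, hf'⟩ := exists_map_vecMul_mooreMatrix_eq σ hσ_surj a g
    simp only [Matrix.coe_vecMulLinear, ← hf]
    refine ⟨hmemC f fun i hi => hf0 i (by omega), hCqs ▸ ⟨_, hmemC f' hf'0, fun j => ?_⟩⟩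
    rw [← hσ₁, hf', hf]
  · have hb := ha.map' (σ ^ 2).toLinearMap (LinearMap.ker_eq_bot.mpr (σ ^ 2).toRingHom.injective)
    rw [LinearMap.finrank_range_of_inj (vecMul_mooreMatrix_injective σ hfix hb (by omega)),
      Module.finrank_fin_fun]

/-- For a generalized twisted Gabidulin code C of dimension k < n,
dim(C ∩ C^{q^s}) ≥ k - 2: the intersection contains a subspace of dimension ≥ k-2. -/
theorem stmt_16 (p s0 m n k h s : ℕ) [Fact p.Prime] (hs0 : 0 < s0) (hm : 0 < m)
    (F : Type*) [Field F] [Fintype F] [CharP F p]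
    (q : ℕ) (hq : q = p ^ s0) (hcard : Fintype.card F = q ^ m)
    (hk : 0 < k) (hkn : k < n) (hnm : n ≤ m) (hgcd : Nat.gcd m s = 1)
    (eta : F) (heta : eta ^ ((q ^ m - 1) / (q - 1)) ≠ (-1 : F) ^ (n * k))
    (Fq : Subfield F) (hFq : ∀ a : F, a ∈ Fq ↔ a ^ q = a)
    (a : Fin n → F) (ha : LinearIndependent Fq a)
    (C Cqs : Set (Fin n → F))
    (hC : C = {c | ∃ f : Fin k → F, ∀ j : Fin n,
      c j = (∑ i : Fin k, f i * (a j) ^ (q ^ (s * (i : ℕ)))) +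
        eta * (f ⟨0, hk⟩) ^ (q ^ h) * (a j) ^ (q ^ (s * k))})
    (hCqs : Cqs = {c | ∃ c' ∈ C, ∀ j : Fin n, c j = (c' j) ^ (q ^ s)}) :
    ∃ W : Submodule F (Fin n → F), (W : Set (Fin n → F)) ⊆ C ∩ Cqs ∧
      k - 2 ≤ Module.finrank F W :=
  stmt_16_general p s0 m n k h s F q hq hcard hk hkn hgcd eta Fq hFq a ha C Cqs hC hCqs
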